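/- arXiv:2106.08769 — 10 statements merged into one kernel-verified Lean document; each statement's English description precedes it below -/
import Mathlib

section
/- For a generalized linear model f_w^i = φ_i^⊤ w with exponential-family loss and L2 regularizer, the gradient of the K-prior K(w) = Σ_{i∈X} [ −h(f_{w*}^i)·f_w^i + A(f_w^i) ] + (δ/2)‖w − w*‖², where w* is a stationary point of the original objective Σ_{i∈D} [−y_i f_w^i + A(f_w^i)] + (δ/2)‖w‖², equals the gradient of the original objective at every w. -/
open RealInnerProductSpace

/-- For a GLM `f_w^i = ⟪φ_i, w⟫` with exponential-family loss and L2 regularizer,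
the gradient of the K-prior
`K(w) = Σ_{i∈X} [−h(f_{w*}^i)·f_w^i + A(f_w^i)] + (δ/2)‖w − w*‖²`,
where `w*` is a stationary point of the original objective
`ℓ̄(w) = Σ_{i∈D} [−y_i f_w^i + A(f_w^i)] + (δ/2)‖w‖²`, equals the gradient of the
original objective at every `w`. -/
theorem stmt2 {P : ℕ} {ι : Type*} (D : Finset ι)
    (φ : ι → EuclideanSpace ℝ (Fin P)) (y : ι → ℝ)
    (A h : ℝ → ℝ) (hA : ∀ x, HasDerivAt A (h x) x)
    (δ : ℝ) (hδ : 0 < δ)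
    (wstar : EuclideanSpace ℝ (Fin P))
    (hstat : ∑ i ∈ D, (h ⟪φ i, wstar⟫ - y i) • φ i + δ • wstar = 0) :
    ∀ w, gradient (fun w => ∑ i ∈ D, (-(h ⟪φ i, wstar⟫) * ⟪φ i, w⟫ + A ⟪φ i, w⟫)
            + (δ / 2) * ‖w - wstar‖ ^ 2) w
      = gradient (fun w => ∑ i ∈ D, (-(y i) * ⟪φ i, w⟫ + A ⟪φ i, w⟫)
            + (δ / 2) * ‖w‖ ^ 2) w := by
  intro w
  have key : (fun w => ∑ i ∈ D, (-(h ⟪φ i, wstar⟫) * ⟪φ i, w⟫ + A ⟪φ i, w⟫)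
            + (δ / 2) * ‖w - wstar‖ ^ 2)
      = (fun w => (∑ i ∈ D, (-(y i) * ⟪φ i, w⟫ + A ⟪φ i, w⟫)
            + (δ / 2) * ‖w‖ ^ 2) + (δ / 2) * ‖wstar‖ ^ 2) := by
    funext v
    have hinner : ⟪∑ i ∈ D, (h ⟪φ i, wstar⟫ - y i) • φ i + δ • wstar, v⟫ = 0 := by
      rw [hstat]; simp
    rw [inner_add_left, sum_inner] at hinner
    simp only [real_inner_smul_left] at hinner
    have hnorm : ‖v - wstar‖ ^ 2 = ‖v‖ ^ 2 - 2 * ⟪v, wstar⟫ + ‖wstar‖ ^ 2 := by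
      rw [norm_sub_sq_real]
    have hsum : ∑ i ∈ D, (-(h ⟪φ i, wstar⟫) * ⟪φ i, v⟫ + A ⟪φ i, v⟫)
        = ∑ i ∈ D, (-(y i) * ⟪φ i, v⟫ + A ⟪φ i, v⟫)
          - ∑ i ∈ D, (h ⟪φ i, wstar⟫ - y i) * ⟪φ i, v⟫ := by
      rw [← Finset.sum_sub_distrib]
      apply Finset.sum_congr rfl
      intro i _
      ring
    rw [hsum, hnorm]
    have hws : ⟪wstar, v⟫ = ⟪v, wstar⟫ := real_inner_comm _ _
    nlinarith [hinner, hws]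
  rw [key]
  unfold gradient
  rw [fderiv_add_const]
end

section
/- Add Data equivalence: with full memory M = X, every stationary point of ℓ_j(w) + K(w; w*, X) is a stationary point of Σ_{i∈D∪{j}} ℓ_i(w) + (δ/2)‖w‖², and conversely; in particular if both objectives are strictly convex with unique minimizers, then ŵ_+ = w_+. -/
open RealInnerProductSpace

/-- Gradient is unchanged by adding a constant. -/
lemma gradient_add_const' {P : ℕ} (f : EuclideanSpace ℝ (Fin P) → ℝ) (c : ℝ) (x : EuclideanSpace ℝ (Fin P)) :
    gradient (fun w => f w + c) x = gradient f x := by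
  unfold gradient
  rw [fderiv_add_const]

/-- Add Data equivalence: with full memory `M = X`, every stationary point of
`ℓ_j(w) + K(w; w*, X)` is a stationary point of `Σ_{i∈D∪{j}} ℓ_i(w) + (δ/2)‖w‖²`
and conversely; and if both objectives are strictly convex with (global) minimizers
`ŵ₊` and `w₊`, then `ŵ₊ = w₊`. -/
theorem stmt3 {P : ℕ} {ι : Type*} [DecidableEq ι] (D : Finset ι) (j : ι) (hj : j ∉ D)
    (φ : ι → EuclideanSpace ℝ (Fin P)) (y : ι → ℝ)
    (A h : ℝ → ℝ) (hA : ∀ x, HasDerivAt A (h x) x) (hAconv : ConvexOn ℝ Set.univ A)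
    (δ : ℝ) (hδ : 0 < δ)
    (wstar : EuclideanSpace ℝ (Fin P))
    (hstat : ∑ i ∈ D, (h ⟪φ i, wstar⟫ - y i) • φ i + δ • wstar = 0)
    -- batch objective on D ∪ {j}
    (F : EuclideanSpace ℝ (Fin P) → ℝ)
    (hF : F = fun w => ∑ i ∈ insert j D, (-(y i) * ⟪φ i, w⟫ + A ⟪φ i, w⟫)
            + (δ / 2) * ‖w‖ ^ 2)
    -- K-prior objective: ℓ_j(w) + K(w; w*, X)
    (G : EuclideanSpace ℝ (Fin P) → ℝ)
    (hG : G = fun w => (-(y j) * ⟪φ j, w⟫ + A ⟪φ j, w⟫)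
            + (∑ i ∈ D, (-(h ⟪φ i, wstar⟫) * ⟪φ i, w⟫ + A ⟪φ i, w⟫)
               + (δ / 2) * ‖w - wstar‖ ^ 2)) :
    (∀ w, gradient F w = 0 ↔ gradient G w = 0) ∧
    (∀ wplus whatplus : EuclideanSpace ℝ (Fin P),
      StrictConvexOn ℝ Set.univ F → StrictConvexOn ℝ Set.univ G →
      (∀ w, F wplus ≤ F w) → (∀ w, G whatplus ≤ G w) → whatplus = wplus) := by
  -- key scalar consequence of stationarity
  have key : ∀ w : EuclideanSpace ℝ (Fin P),
      (∑ i ∈ D, (h ⟪φ i, wstar⟫ - y i) * ⟪φ i, w⟫) + δ * ⟪wstar, w⟫ = 0 := by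
    intro w
    have h0 : ⟪∑ i ∈ D, (h ⟪φ i, wstar⟫ - y i) • φ i + δ • wstar, w⟫ = 0 := by
      rw [hstat]; exact inner_zero_left w
    rw [inner_add_left, sum_inner, real_inner_smul_left] at h0
    simp only [real_inner_smul_left] at h0
    exact h0
  -- F and G differ by a constant
  have hFG : ∀ w, F w = G w - (δ / 2) * ‖wstar‖ ^ 2 := by
    intro w
    have hk := key w
    have hnorm : ‖w - wstar‖ ^ 2 = ‖w‖ ^ 2 - 2 * ⟪wstar, w⟫ + ‖wstar‖ ^ 2 := by
      rw [norm_sub_sq_real, real_inner_comm]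
    have hsum : ∑ i ∈ D, (-(y i) * ⟪φ i, w⟫ + A ⟪φ i, w⟫)
        - ∑ i ∈ D, (-(h ⟪φ i, wstar⟫) * ⟪φ i, w⟫ + A ⟪φ i, w⟫)
        = ∑ i ∈ D, (h ⟪φ i, wstar⟫ - y i) * ⟪φ i, w⟫ := by
      rw [← Finset.sum_sub_distrib]
      exact Finset.sum_congr rfl fun i _ => by ring
    simp only [hF, hG, Finset.sum_insert hj]
    rw [hnorm]
    linear_combination hsum + hk
  have hgrad : ∀ w, gradient F w = gradient G w := by
    intro w
    have hFfun : F = fun w => G w + (-(δ / 2) * ‖wstar‖ ^ 2) := by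
      funext w
      rw [hFG w]; ring
    rw [hFfun, gradient_add_const']
  refine ⟨fun w => by rw [hgrad w], ?_⟩
  intro wplus whatplus _ hGconv hFmin hGmin
  -- whatplus also minimizes G... show both minimize G
  have hwplusG : ∀ w, G wplus ≤ G w := by
    intro w
    have := hFmin w
    rw [hFG wplus, hFG w] at this
    linarith
  exact hGconv.eq_of_isMinOn (fun w _ => hGmin w) (fun w _ => hwplusG w)
    (Set.mem_univ _) (Set.mem_univ _)
end

section
/- Remove Data equivalence: with full memory M = X, the gradient of −ℓ_k(w) + K(w; w*, X) equals the gradient of Σ_{i∈D∖{k}} ℓ_i(w) + (δ/2)‖w‖² at every w; hence under strict convexity of both objectives their minimizers coincide. -/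
/-!
The stationarity of `w*` makes the kernel objective differ from the leave-`k`-out objective
only by the constant `(δ/2)‖w*‖²`: the data terms of `k` cancel against `−ℓ_k`, the remaining
terms `Σ_D (y_i − h(φ_i·w*)) φ_i·w` are linear in `w`, and expanding `‖w − w*‖²` produces the
linear term `−δ w*·w`, which cancels them by the stationarity equation. Gradients are blind to
additive constants, and so are minimizers; strict convexity makes the minimizer unique.
-/

open RealInnerProductSpace

theorem gradient_add_const {F : Type*} [NormedAddCommGroup F] [InnerProductSpace ℝ F]
    [CompleteSpace F] (f : F → ℝ) (c : ℝ) (x : F) :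
    gradient (fun y => f y + c) x = gradient f x := by
  simp only [gradient, fderiv_add_const]

section RemoveData

variable {E : Type*} [NormedAddCommGroup E] [InnerProductSpace ℝ E]
  {ι : Type*} [DecidableEq ι] {D : Finset ι} {k : ι}
  (φ : ι → E) (y : ι → ℝ) (A h : ℝ → ℝ) (δ : ℝ) (wstar : E)

theorem kernelObjective_eq_removedObjective_add_const (hk : k ∈ D)
    (hstat : ∑ i ∈ D, (h ⟪φ i, wstar⟫ - y i) • φ i + δ • wstar = 0) (w : E) :
    -(-(y k) * ⟪φ k, w⟫ + A ⟪φ k, w⟫)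
        + (∑ i ∈ D, (-(h ⟪φ i, wstar⟫) * ⟪φ i, w⟫ + A ⟪φ i, w⟫) + (δ / 2) * ‖w - wstar‖ ^ 2)
      = (∑ i ∈ D.erase k, (-(y i) * ⟪φ i, w⟫ + A ⟪φ i, w⟫) + (δ / 2) * ‖w‖ ^ 2)
        + (δ / 2) * ‖wstar‖ ^ 2 := by
  have hstat_w : ∑ i ∈ D, (h ⟪φ i, wstar⟫ - y i) * ⟪φ i, w⟫ + δ * ⟪wstar, w⟫ = 0 := by
    simpa only [inner_add_left, sum_inner, real_inner_smul_left, inner_zero_left]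
      using congrArg (⟪·, w⟫) hstat
  have hsplit : ∑ i ∈ D, (-(h ⟪φ i, wstar⟫) * ⟪φ i, w⟫ + A ⟪φ i, w⟫)
      = (-(y k) * ⟪φ k, w⟫ + A ⟪φ k, w⟫)
        + ∑ i ∈ D.erase k, (-(y i) * ⟪φ i, w⟫ + A ⟪φ i, w⟫)
        - ∑ i ∈ D, (h ⟪φ i, wstar⟫ - y i) * ⟪φ i, w⟫ := by
    rw [Finset.add_sum_erase D (fun i => -(y i) * ⟪φ i, w⟫ + A ⟪φ i, w⟫) hk,
      ← Finset.sum_sub_distrib]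
    exact Finset.sum_congr rfl fun i _ => by ring
  rw [hsplit, norm_sub_sq_real, real_inner_comm wstar w]
  linarith

end RemoveData

theorem stmt4_general {P : ℕ} {ι : Type*} [DecidableEq ι] (D : Finset ι) (k : ι) (hk : k ∈ D)
    (φ : ι → EuclideanSpace ℝ (Fin P)) (y : ι → ℝ)
    (A h : ℝ → ℝ)
    (δ : ℝ)
    (wstar : EuclideanSpace ℝ (Fin P))
    (hstat : ∑ i ∈ D, (h ⟪φ i, wstar⟫ - y i) • φ i + δ • wstar = 0)
    (F : EuclideanSpace ℝ (Fin P) → ℝ)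
    (hF : F = fun w => ∑ i ∈ D.erase k, (-(y i) * ⟪φ i, w⟫ + A ⟪φ i, w⟫)
            + (δ / 2) * ‖w‖ ^ 2)
    (G : EuclideanSpace ℝ (Fin P) → ℝ)
    (hG : G = fun w => -(-(y k) * ⟪φ k, w⟫ + A ⟪φ k, w⟫)
            + (∑ i ∈ D, (-(h ⟪φ i, wstar⟫) * ⟪φ i, w⟫ + A ⟪φ i, w⟫)
               + (δ / 2) * ‖w - wstar‖ ^ 2)) :
    (∀ w, gradient G w = gradient F w) ∧
    (∀ wminus whatminus : EuclideanSpace ℝ (Fin P),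
      StrictConvexOn ℝ Set.univ F → StrictConvexOn ℝ Set.univ G →
      (∀ w, F wminus ≤ F w) → (∀ w, G whatminus ≤ G w) → whatminus = wminus) := by
  have hGF : G = fun w => F w + (δ / 2) * ‖wstar‖ ^ 2 := by
    subst hF hG
    exact funext (kernelObjective_eq_removedObjective_add_const φ y A h δ wstar hk hstat)
  refine ⟨fun w => by rw [hGF, gradient_add_const], ?_⟩
  intro wminus whatminus hFconv _ hFmin hGmin
  have hFmin' : ∀ w, F whatminus ≤ F w := fun w => by
    simpa only [hGF, add_le_add_iff_right] using hGmin w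
  exact hFconv.eq_of_isMinOn (isMinOn_iff.mpr fun w _ => hFmin' w)
    (isMinOn_iff.mpr fun w _ => hFmin w) (Set.mem_univ _) (Set.mem_univ _)

/-- Remove Data equivalence: with full memory `M = X`, the gradient of
`−ℓ_k(w) + K(w; w*, X)` equals the gradient of `Σ_{i∈D∖{k}} ℓ_i(w) + (δ/2)‖w‖²`
at every `w`; hence under strict convexity of both objectives their (global)
minimizers coincide. -/
theorem stmt4 {P : ℕ} {ι : Type*} [DecidableEq ι] (D : Finset ι) (k : ι) (hk : k ∈ D)
    (φ : ι → EuclideanSpace ℝ (Fin P)) (y : ι → ℝ)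
    (A h : ℝ → ℝ) (hA : ∀ x, HasDerivAt A (h x) x)
    (δ : ℝ) (hδ : 0 < δ)
    (wstar : EuclideanSpace ℝ (Fin P))
    (hstat : ∑ i ∈ D, (h ⟪φ i, wstar⟫ - y i) • φ i + δ • wstar = 0)
    (F : EuclideanSpace ℝ (Fin P) → ℝ)
    (hF : F = fun w => ∑ i ∈ D.erase k, (-(y i) * ⟪φ i, w⟫ + A ⟪φ i, w⟫)
            + (δ / 2) * ‖w‖ ^ 2)
    (G : EuclideanSpace ℝ (Fin P) → ℝ)
    (hG : G = fun w => -(-(y k) * ⟪φ k, w⟫ + A ⟪φ k, w⟫)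
            + (∑ i ∈ D, (-(h ⟪φ i, wstar⟫) * ⟪φ i, w⟫ + A ⟪φ i, w⟫)
               + (δ / 2) * ‖w - wstar‖ ^ 2)) :
    (∀ w, gradient G w = gradient F w) ∧
    (∀ wminus whatminus : EuclideanSpace ℝ (Fin P),
      StrictConvexOn ℝ Set.univ F → StrictConvexOn ℝ Set.univ G →
      (∀ w, F wminus ≤ F w) → (∀ w, G whatminus ≤ G w) → whatminus = wminus) :=
  stmt4_general D k hk φ y A h δ wstar hstat F hF G hG
end

section
/- Gradient-reconstruction error for limited memory: for M ⊆ X, the difference between the gradient of the full-batch objective ℓ̄(w) and the gradient of the K-prior K(w; w*, M) equals Σ_{i∈X∖M} φ_i (h(φ_i^⊤w) − h(φ_i^⊤w*)). -/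
open RealInnerProductSpace

/-!
Both objectives are regularised GLM losses `∑ᵢ (-cᵢ ⟪φᵢ, w⟫ + A ⟪φᵢ, w⟫) + (δ/2)‖w - v‖²`, whose
gradient is `∑ᵢ (h ⟪φᵢ, w⟫ - cᵢ) • φᵢ + δ • (w - v)`. In the difference of the two gradients the
terms `h ⟪φᵢ, w⟫ • φᵢ` with `i ∈ M` cancel, and stationarity of `w*` turns the leftover
`∑_{i ∈ X} (h ⟪φᵢ, w*⟫ - yᵢ) • φᵢ` into `-δ • w*`, which cancels against the regularisers.
-/

section GLMGradient

variable {F : Type*} [NormedAddCommGroup F] [InnerProductSpace ℝ F]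

theorem hasFDerivAt_neg_mul_inner_add_comp_inner {A h : ℝ → ℝ}
    (hA : ∀ x, HasDerivAt A (h x) x) (φ : F) (c : ℝ) (w : F) :
    HasFDerivAt (fun w => -c * ⟪φ, w⟫ + A ⟪φ, w⟫) ((h ⟪φ, w⟫ - c) • innerSL ℝ φ) w := by
  have hinner : HasFDerivAt (fun w : F => ⟪φ, w⟫) (innerSL ℝ φ) w :=
    (innerSL ℝ φ).hasFDerivAt
  refine ((hinner.const_mul (-c)).add ((hA _).comp_hasFDerivAt w hinner)).congr_fderiv ?_
  ext u
  simp only [add_apply, smul_apply, smul_eq_mul, innerSL_apply_apply]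
  ring

theorem hasFDerivAt_half_mul_norm_sub_sq (δ : ℝ) (v w : F) :
    HasFDerivAt (fun w => δ / 2 * ‖w - v‖ ^ 2) (δ • innerSL ℝ (w - v)) w := by
  refine (((hasFDerivAt_id w).sub_const v).norm_sq.const_mul (δ / 2)).congr_fderiv ?_
  ext u
  simp only [smul_apply, ContinuousLinearMap.comp_apply, ContinuousLinearMap.id_apply, id,
    innerSL_apply_apply, smul_eq_mul, nsmul_eq_mul]
  ring

theorem hasGradientAt_glm_objective [CompleteSpace F] {ι : Type*} {A h : ℝ → ℝ}
    (hA : ∀ x, HasDerivAt A (h x) x) (S : Finset ι) (φ : ι → F) (c : ι → ℝ) (δ : ℝ)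
    (v w : F) :
    HasGradientAt (fun w => ∑ i ∈ S, (-(c i) * ⟪φ i, w⟫ + A ⟪φ i, w⟫) + δ / 2 * ‖w - v‖ ^ 2)
      (∑ i ∈ S, (h ⟪φ i, w⟫ - c i) • φ i + δ • (w - v)) w := by
  rw [hasGradientAt_iff_hasFDerivAt]
  have hterms := HasFDerivAt.fun_sum (u := S)
    fun i _ => hasFDerivAt_neg_mul_inner_add_comp_inner hA (φ i) (c i) w
  refine (hterms.add (hasFDerivAt_half_mul_norm_sub_sq δ v w)).congr_fderiv ?_
  ext u
  simp

end GLMGradient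

theorem stmt5_general {P : ℕ} {ι : Type*} [DecidableEq ι] (X M : Finset ι) (hM : M ⊆ X)
    (φ : ι → EuclideanSpace ℝ (Fin P)) (y : ι → ℝ)
    (A h : ℝ → ℝ) (hA : ∀ x, HasDerivAt A (h x) x)
    (δ : ℝ)
    (wstar : EuclideanSpace ℝ (Fin P))
    (hstat : ∑ i ∈ X, (h ⟪φ i, wstar⟫ - y i) • φ i + δ • wstar = 0)
    (w : EuclideanSpace ℝ (Fin P)) :
    gradient (fun w => ∑ i ∈ X, (-(y i) * ⟪φ i, w⟫ + A ⟪φ i, w⟫)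
        + (δ / 2) * ‖w‖ ^ 2) w
      - gradient (fun w => ∑ i ∈ M, (-(h ⟪φ i, wstar⟫) * ⟪φ i, w⟫ + A ⟪φ i, w⟫)
        + (δ / 2) * ‖w - wstar‖ ^ 2) w
      = ∑ i ∈ X \ M, (h ⟪φ i, w⟫ - h ⟪φ i, wstar⟫) • φ i := by
  have hloss : gradient (fun w => ∑ i ∈ X, (-(y i) * ⟪φ i, w⟫ + A ⟪φ i, w⟫)
      + (δ / 2) * ‖w‖ ^ 2) w = ∑ i ∈ X, (h ⟪φ i, w⟫ - y i) • φ i + δ • w := by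
    simpa using (hasGradientAt_glm_objective hA X φ y δ 0 w).gradient
  have hprior := (hasGradientAt_glm_objective hA M φ (fun i => h ⟪φ i, wstar⟫) δ wstar w).gradient
  have hsplit := Finset.sum_sdiff hM (f := fun i => (h ⟪φ i, w⟫ - h ⟪φ i, wstar⟫) • φ i)
  have hrecentre : ∑ i ∈ X, (h ⟪φ i, w⟫ - y i) • φ i
      = ∑ i ∈ X, (h ⟪φ i, w⟫ - h ⟪φ i, wstar⟫) • φ i
        + ∑ i ∈ X, (h ⟪φ i, wstar⟫ - y i) • φ i := by
    rw [← Finset.sum_add_distrib]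
    exact Finset.sum_congr rfl fun i _ => by module
  rw [hloss, hprior]
  linear_combination (norm := module) hrecentre - hsplit + hstat

/-- Gradient-reconstruction error for limited memory: for `M ⊆ X`, the difference
between the gradient of the full-batch objective `ℓ̄(w)` and the gradient of the
K-prior `K(w; w*, M)` equals `Σ_{i∈X∖M} φ_i (h(φ_i^⊤w) − h(φ_i^⊤w*))`. -/
theorem stmt5 {P : ℕ} {ι : Type*} [DecidableEq ι] (X M : Finset ι) (hM : M ⊆ X)
    (φ : ι → EuclideanSpace ℝ (Fin P)) (y : ι → ℝ)
    (A h : ℝ → ℝ) (hA : ∀ x, HasDerivAt A (h x) x)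
    (δ : ℝ) (hδ : 0 < δ)
    (wstar : EuclideanSpace ℝ (Fin P))
    (hstat : ∑ i ∈ X, (h ⟪φ i, wstar⟫ - y i) • φ i + δ • wstar = 0)
    (w : EuclideanSpace ℝ (Fin P)) :
    gradient (fun w => ∑ i ∈ X, (-(y i) * ⟪φ i, w⟫ + A ⟪φ i, w⟫)
        + (δ / 2) * ‖w‖ ^ 2) w
      - gradient (fun w => ∑ i ∈ M, (-(h ⟪φ i, wstar⟫) * ⟪φ i, w⟫ + A ⟪φ i, w⟫)
        + (δ / 2) * ‖w - wstar‖ ^ 2) w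
      = ∑ i ∈ X \ M, (h ⟪φ i, w⟫ - h ⟪φ i, wstar⟫) • φ i :=
  stmt5_general X M hM φ y A h hA δ wstar hstat w
end

section
/- The quadratic weight-prior is the linearization of the K-prior: applying the first-order Taylor approximation h(φ_i^⊤w) − h(φ_i^⊤w*) ≈ h'(φ_i^⊤w*) φ_i^⊤(w − w*) to the K-prior gradient yields exactly the gradient of R_quad(w) = (1/2)(w − w*)^⊤(G*(X) + δI)(w − w*), where G*(X) = Σ_{i∈X} φ_i h'(φ_i^⊤w*) φ_i^⊤. That is, G*(X)(w−w*) + δ(w−w*) = ∇R_quad(w). -/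
/-! The Gauss–Newton map `v ↦ Σ h'(⟪φ i, w*⟫) ⟪φ i, v⟫ φ i` is symmetric, hence so is
`T = G + δ I`, and for a symmetric `T` the quadratic form `½ ⟪w - w*, T (w - w*)⟫` has derivative
`⟪T (w - w*), ·⟫`: the two terms of the product rule coincide. -/

open RealInnerProductSpace

section

variable {E : Type*} [NormedAddCommGroup E] [InnerProductSpace ℝ E]

theorem LinearMap.isSymmetric_of_eq_sum_inner_smul {ι : Type*} (X : Finset ι) (φ : ι → E)
    (c : ι → ℝ) (G : E →ₗ[ℝ] E) (hG : ∀ v, G v = ∑ i ∈ X, (c i * ⟪φ i, v⟫) • φ i) :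
    G.IsSymmetric := by
  intro u v
  rw [hG u, hG v, sum_inner, inner_sum]
  refine Finset.sum_congr rfl fun i _ => ?_
  rw [real_inner_smul_left, real_inner_smul_right, real_inner_comm u (φ i)]
  ring

theorem LinearMap.IsSymmetric.hasGradientAt_half_inner_sub_apply_sub [CompleteSpace E]
    {T : E →L[ℝ] E} (hT : (T : E →ₗ[ℝ] E).IsSymmetric) (a x : E) :
    HasGradientAt (fun w => (1 / 2 : ℝ) * ⟪w - a, T (w - a)⟫) (T (x - a)) x := by
  have hquad := ((hT.hasStrictFDerivAt_reApplyInnerSelf (x - a)).hasFDerivAt.comp x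
    ((hasFDerivAt_id x).sub_const a)).const_mul (1 / 2 : ℝ)
  rw [hasGradientAt_iff_hasFDerivAt]
  refine (hquad.congr_fderiv ?_).congr_of_eventuallyEq (.of_forall fun w => ?_)
  · ext y
    simp
  · simp [ContinuousLinearMap.reApplyInnerSelf_apply, real_inner_comm]

end

theorem stmt7_general {P : ℕ} {ι : Type*} (X : Finset ι)
    (φ : ι → EuclideanSpace ℝ (Fin P))
    (h : ℝ → ℝ)
    (δ : ℝ)
    (wstar : EuclideanSpace ℝ (Fin P))
    (G : EuclideanSpace ℝ (Fin P) →ₗ[ℝ] EuclideanSpace ℝ (Fin P))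
    (hG : ∀ v, G v = ∑ i ∈ X, (deriv h ⟪φ i, wstar⟫ * ⟪φ i, v⟫) • φ i)
    (w : EuclideanSpace ℝ (Fin P)) :
    HasGradientAt
      (fun w => (1 / 2 : ℝ) * ⟪w - wstar, G (w - wstar) + δ • (w - wstar)⟫)
      (G (w - wstar) + δ • (w - wstar)) w := by
  have hsymm : (G + δ • LinearMap.id).IsSymmetric :=
    (LinearMap.isSymmetric_of_eq_sum_inner_smul X φ _ G hG).add
      (LinearMap.IsSymmetric.id.smul (by simp))
  simpa using hsymm.hasGradientAt_half_inner_sub_apply_sub (T := LinearMap.toContinuousLinearMap _)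
    wstar w

/-- The quadratic weight-prior is the linearization of the K-prior: applying the
first-order Taylor approximation to the K-prior gradient yields exactly the gradient of
`R_quad(w) = (1/2)⟪w − w*, (G*(X) + δI)(w − w*)⟫`, i.e.
`G*(X)(w−w*) + δ(w−w*) = ∇R_quad(w)`. -/
theorem stmt7 {P : ℕ} {ι : Type*} (X : Finset ι)
    (φ : ι → EuclideanSpace ℝ (Fin P))
    (h : ℝ → ℝ) (hh : Differentiable ℝ h)
    (hh' : ∀ x, 0 ≤ deriv h x)  -- h' ≥ 0 for convex A
    (δ : ℝ) (hδ : 0 < δ)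
    (wstar : EuclideanSpace ℝ (Fin P))
    (G : EuclideanSpace ℝ (Fin P) →ₗ[ℝ] EuclideanSpace ℝ (Fin P))
    (hG : ∀ v, G v = ∑ i ∈ X, (deriv h ⟪φ i, wstar⟫ * ⟪φ i, v⟫) • φ i)
    (w : EuclideanSpace ℝ (Fin P)) :
    HasGradientAt
      (fun w => (1 / 2 : ℝ) * ⟪w - wstar, G (w - wstar) + δ • (w - wstar)⟫)
      (G (w - wstar) + δ • (w - wstar)) w :=
  stmt7_general X φ h δ wstar G hG w
end

section
/- Deep-learning K-prior gradient decomposition: for a differentiable (possibly nonlinear) model f_w, the gradient of K(w) = Σ_{i∈D}[−h(f_{w*}^i) f_w^i + A(f_w^i)] + (δ/2)‖w − w*‖² equals ∇ℓ̄(w) − ( Σ_{i∈D} ∇f_w^i r_{w*}^i + δ w* ), where ℓ̄(w) = Σ_{i∈D}[−y_i f_w^i + A(f_w^i)] + (δ/2)‖w‖² and r_{w*}^i = h(f_{w*}^i) − y_i. -/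
/-!
Expanding `‖w - w*‖² = ‖w‖² - 2⟪w*, w⟫ + ‖w*‖²` and writing each `-h(f_{w*}^i)` as
`-y_i - (h(f_{w*}^i) - y_i)` gives `K = ℓ̄ - g + (δ/2)‖w*‖²` with
`g(w) = Σ_i (h(f_{w*}^i) - y_i) f_w^i + δ⟪w*, w⟫`. The `A`-terms cancel, so only the
gradient of `g` has to be computed.
-/

open RealInnerProductSpace

section Gradient

variable {F : Type*} [NormedAddCommGroup F] [InnerProductSpace ℝ F] [CompleteSpace F]
  {f g : F → ℝ} {f' g' x : F}

theorem HasGradientAt.add (hf : HasGradientAt f f' x) (hg : HasGradientAt g g' x) :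
    HasGradientAt (fun x => f x + g x) (f' + g') x := by
  rw [hasGradientAt_iff_hasFDerivAt, map_add]
  exact hf.hasFDerivAt.add hg.hasFDerivAt

theorem HasGradientAt.sub (hf : HasGradientAt f f' x) (hg : HasGradientAt g g' x) :
    HasGradientAt (fun x => f x - g x) (f' - g') x := by
  rw [hasGradientAt_iff_hasFDerivAt, map_sub]
  exact hf.hasFDerivAt.sub hg.hasFDerivAt

theorem HasGradientAt.add_const (hf : HasGradientAt f f' x) (c : ℝ) :
    HasGradientAt (fun x => f x + c) f' x :=
  hasGradientAt_iff_hasFDerivAt.mpr (hf.hasFDerivAt.add_const c)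

theorem HasGradientAt.const_mul (c : ℝ) (hf : HasGradientAt f f' x) :
    HasGradientAt (fun x => c * f x) (c • f') x := by
  rw [hasGradientAt_iff_hasFDerivAt, map_smul]
  exact hf.hasFDerivAt.const_mul c

theorem HasGradientAt.sum {ι : Type*} (s : Finset ι) {f : ι → F → ℝ} {f' : ι → F}
    (hf : ∀ i ∈ s, HasGradientAt (f i) (f' i) x) :
    HasGradientAt (fun x => ∑ i ∈ s, f i x) (∑ i ∈ s, f' i) x := by
  rw [hasGradientAt_iff_hasFDerivAt, map_sum]
  exact HasFDerivAt.fun_sum fun i hi => (hf i hi).hasFDerivAt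

theorem hasGradientAt_inner_right (v x : F) : HasGradientAt (fun w => ⟪v, w⟫) v x :=
  hasGradientAt_iff_hasFDerivAt.mpr (InnerProductSpace.toDual ℝ F v).hasFDerivAt

end Gradient

theorem stmt9_general {P : ℕ} {ι : Type*} (D : Finset ι)
    (A h : ℝ → ℝ)
    (f : EuclideanSpace ℝ (Fin P) → ι → ℝ)
    (gf : ι → EuclideanSpace ℝ (Fin P) → EuclideanSpace ℝ (Fin P))
    (hf : ∀ i w, HasGradientAt (fun w => f w i) (gf i w) w)
    (y : ι → ℝ) (δ : ℝ)
    (wstar w : EuclideanSpace ℝ (Fin P))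
    (gL : EuclideanSpace ℝ (Fin P))
    (hL : HasGradientAt
      (fun w => ∑ i ∈ D, (-(y i) * f w i + A (f w i)) + (δ / 2) * ‖w‖ ^ 2) gL w) :
    HasGradientAt
      (fun w => ∑ i ∈ D, (-(h (f wstar i)) * f w i + A (f w i))
        + (δ / 2) * ‖w - wstar‖ ^ 2)
      (gL - (∑ i ∈ D, (h (f wstar i) - y i) • gf i w + δ • wstar)) w := by
  have hg : HasGradientAt
      (fun w => ∑ i ∈ D, (h (f wstar i) - y i) * f w i + δ * ⟪wstar, w⟫)
      (∑ i ∈ D, (h (f wstar i) - y i) • gf i w + δ • wstar) w :=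
    (HasGradientAt.sum D fun i _ => (hf i w).const_mul _).add
      ((hasGradientAt_inner_right wstar w).const_mul δ)
  convert (hL.sub hg).add_const ((δ / 2) * ‖wstar‖ ^ 2) using 2 with v
  have hsum : ∑ i ∈ D, (-(h (f wstar i)) * f v i + A (f v i))
      = ∑ i ∈ D, (-(y i) * f v i + A (f v i)) - ∑ i ∈ D, (h (f wstar i) - y i) * f v i := by
    rw [← Finset.sum_sub_distrib]
    exact Finset.sum_congr rfl fun i _ => by ring
  rw [hsum, norm_sub_sq_real, real_inner_comm]
  ring

/-- Deep-learning K-prior gradient decomposition: for a differentiable (possibly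
nonlinear) model `f_w`, the gradient of
`K(w) = Σ_i [−h(f_{w*}^i) f_w^i + A(f_w^i)] + (δ/2)‖w − w*‖²` equals
`∇ℓ̄(w) − (Σ_i (h(f_{w*}^i) − y_i) • ∇f_w^i + δ w*)`, where
`ℓ̄(w) = Σ_i [−y_i f_w^i + A(f_w^i)] + (δ/2)‖w‖²`. -/
theorem stmt9 {P : ℕ} {ι : Type*} (D : Finset ι)
    (A h : ℝ → ℝ) (hA : ∀ x, HasDerivAt A (h x) x)
    (f : EuclideanSpace ℝ (Fin P) → ι → ℝ)
    (gf : ι → EuclideanSpace ℝ (Fin P) → EuclideanSpace ℝ (Fin P))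
    (hf : ∀ i w, HasGradientAt (fun w => f w i) (gf i w) w)
    (y : ι → ℝ) (δ : ℝ) (hδ : 0 ≤ δ)
    (wstar w : EuclideanSpace ℝ (Fin P))
    (gL : EuclideanSpace ℝ (Fin P))
    (hL : HasGradientAt
      (fun w => ∑ i ∈ D, (-(y i) * f w i + A (f w i)) + (δ / 2) * ‖w‖ ^ 2) gL w) :
    HasGradientAt
      (fun w => ∑ i ∈ D, (-(h (f wstar i)) * f w i + A (f w i))
        + (δ / 2) * ‖w - wstar‖ ^ 2)
      (gL - (∑ i ∈ D, (h (f wstar i) - y i) • gf i w + δ • wstar)) w :=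
  stmt9_general D A h f gf hf y δ wstar w gL hL
end

section
/- Change Regularizer equivalence: let B_{GR}(w‖w*) = G(w) + R*(η*) − w^⊤η* with η* = ∇R(w*) and R* the convex conjugate of R. Then the gradient of K(w) = Σ_{i∈X}[−h(φ_i^⊤w*) φ_i^⊤w + A(φ_i^⊤w)] + B_{GR}(w‖w*) equals the gradient of Σ_{i∈D}[−y_i φ_i^⊤w + A(φ_i^⊤w)] + G(w), provided w* is a stationary point of the original objective with regularizer R. Hence for strictly convex objectives the minimizers coincide. -/
open RealInnerProductSpace

/-- Change Regularizer equivalence: let `B_{GR}(w‖w*) = G(w) + R*(η*) − ⟪w, η*⟫` with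
`η* = ∇R(w*)` and `R*` the convex conjugate of `R`. Then the gradient of
`K(w) = Σ_{i∈X}[−h(φ_i^⊤w*) φ_i^⊤w + A(φ_i^⊤w)] + B_{GR}(w‖w*)` equals the gradient of
`Σ_{i∈D}[−y_i φ_i^⊤w + A(φ_i^⊤w)] + G(w)` at every `w`, provided `w*` is a stationary
point of the original objective with regularizer `R`; hence for strictly convex
objectives the (global) minimizers coincide. -/
theorem stmt10 {P : ℕ} {ι : Type*} (D : Finset ι)
    (φ : ι → EuclideanSpace ℝ (Fin P)) (y : ι → ℝ)
    (A h : ℝ → ℝ) (hA : ∀ x, HasDerivAt A (h x) x)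
    (R G : EuclideanSpace ℝ (Fin P) → ℝ)
    (gR gG : EuclideanSpace ℝ (Fin P) → EuclideanSpace ℝ (Fin P))
    (hR : ∀ w, HasGradientAt R (gR w) w) (hG : ∀ w, HasGradientAt G (gG w) w)
    (hRconv : StrictConvexOn ℝ Set.univ R) (hGconv : StrictConvexOn ℝ Set.univ G)
    (wstar : EuclideanSpace ℝ (Fin P))
    (hstat : ∑ i ∈ D, (h ⟪φ i, wstar⟫ - y i) • φ i + gR wstar = 0)
    (eta : EuclideanSpace ℝ (Fin P)) (heta : eta = gR wstar)
    (Rconj : ℝ) (hRconj : Rconj = ⨆ x : EuclideanSpace ℝ (Fin P), (⟪eta, x⟫ - R x))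
    (Kobj newObj : EuclideanSpace ℝ (Fin P) → ℝ)
    (hK : Kobj = fun w => ∑ i ∈ D, (-(h ⟪φ i, wstar⟫) * ⟪φ i, w⟫ + A ⟪φ i, w⟫)
            + (G w + Rconj - ⟪w, eta⟫))
    (hnew : newObj = fun w => ∑ i ∈ D, (-(y i) * ⟪φ i, w⟫ + A ⟪φ i, w⟫) + G w) :
    (∀ w, gradient Kobj w = gradient newObj w) ∧
    (∀ wG whatG : EuclideanSpace ℝ (Fin P),
      StrictConvexOn ℝ Set.univ newObj → StrictConvexOn ℝ Set.univ Kobj →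
      (∀ w, newObj wG ≤ newObj w) → (∀ w, Kobj whatG ≤ Kobj w) → whatG = wG) := by
  -- Key: Kobj = newObj + Rconj
  have key : Kobj = fun w => newObj w + Rconj := by
    funext w
    have hsum : ∑ i ∈ D, (h ⟪φ i, wstar⟫ - y i) • φ i = -eta := by
      rw [heta]; linear_combination (norm := module) hstat
    have hinner : ∑ i ∈ D, (h ⟪φ i, wstar⟫ - y i) * ⟪φ i, w⟫ = -⟪w, eta⟫ := by
      have h0 := congrArg (fun v => (⟪v, w⟫ : ℝ)) hsum
      simp only [sum_inner, real_inner_smul_left, inner_neg_left] at h0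
      rw [h0, real_inner_comm]
    have expand : ∀ i, (-(h ⟪φ i, wstar⟫) * ⟪φ i, w⟫ + A ⟪φ i, w⟫)
        = (-(y i) * ⟪φ i, w⟫ + A ⟪φ i, w⟫) - (h ⟪φ i, wstar⟫ - y i) * ⟪φ i, w⟫ := by
      intro i; ring
    rw [hK, hnew]
    simp only [expand, Finset.sum_sub_distrib, hinner]
    ring
  constructor
  · intro w
    rw [key]
    unfold gradient
    congr 1
    exact fderiv_add_const Rconj
  · intro wG whatG hnc _ hmin hminK
    by_contra hne
    have hlt := hnc.2 (Set.mem_univ whatG) (Set.mem_univ wG) hne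
      (by norm_num : (0:ℝ) < 1/2) (by norm_num : (0:ℝ) < 1/2)
      (by norm_num : (1:ℝ)/2 + 1/2 = 1)
    have h1 : newObj whatG ≤ newObj wG := by
      have := hminK wG
      rw [key] at this; simpa [key] using this
    have h2 := hmin (((1:ℝ)/2) • whatG + ((1:ℝ)/2) • wG)
    simp only [smul_eq_mul] at hlt
    linarith [hmin whatG]
end

section
/- Optimal K-prior exact reconstruction: let Φ^⊤ = U S V^⊤ be a compact SVD of rank K of the feature matrix, memory M* = {u_1,…,u_K} the left singular vectors, and weights β* = D_u^{-1} S V^⊤ d_x where d_x ∈ ℝ^N has entries h(φ_i^⊤w) − h(φ_i^⊤w*) and D_u is diagonal with entries h(u_j^⊤w) − h(u_j^⊤w*) (assumed nonzero). Then Σ_{j=1}^K β*_j u_j (h(u_j^⊤w) − h(u_j^⊤w*)) + δ(w − w*) = Σ_{i∈X} φ_i (h(φ_i^⊤w) − h(φ_i^⊤w*)) + δ(w − w*), which equals ∇ℓ̄(w) when w* is a stationary point of ℓ̄. -/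
/-!
Writing `φ_i = Σ_j s_j V_{ij} u_j`, the sum `Σ_i d_x(i) φ_i` regroups as
`Σ_j (s_j Σ_i V_{ij} d_x(i)) u_j`, and the weights `β*_j` are chosen so that `β*_j D_u(j)`
is exactly this coefficient. Subtracting the vanishing gradient at `w*` from the gradient
`Σ_i (h(φ_i^⊤w) − y_i) φ_i + δ w` of `ℓ̄` at `w` gives `Σ_i d_x(i) φ_i + δ(w − w*)`.
-/

open RealInnerProductSpace

section Factorization

variable {M : Type*} [AddCommMonoid M] [Module ℝ M] {ι κ : Type*} [Fintype ι] [Fintype κ]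

theorem sum_smul_eq_sum_smul_of_eq_sum_smul {φ : ι → M} {u : κ → M} {s : κ → ℝ}
    {V : ι → κ → ℝ} (hφ : ∀ i, φ i = ∑ j, (s j * V i j) • u j) (c : ι → ℝ) :
    ∑ i, c i • φ i = ∑ j, (s j * ∑ i, V i j * c i) • u j := by
  simp_rw [hφ, Finset.smul_sum, smul_smul, Finset.mul_sum, Finset.sum_smul]
  rw [Finset.sum_comm]
  congr! 3
  ring

end Factorization

section GLM

variable {E : Type*} [NormedAddCommGroup E] [InnerProductSpace ℝ E] {ι : Type*} [Fintype ι]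

theorem hasGradientAt_glm_loss [CompleteSpace E] (φ : ι → E) (y : ι → ℝ) {A h : ℝ → ℝ}
    (hA : ∀ x, HasDerivAt A (h x) x) (δ : ℝ) (w : E) :
    HasGradientAt (fun w => ∑ i, (-(y i) * ⟪φ i, w⟫ + A ⟪φ i, w⟫) + (δ / 2) * ‖w‖ ^ 2)
      (∑ i, (h ⟪φ i, w⟫ - y i) • φ i + δ • w) w := by
  rw [hasGradientAt_iff_hasFDerivAt]
  have hFD := (HasFDerivAt.fun_sum (u := Finset.univ) fun i _ =>
      (((innerSL ℝ (φ i)).hasFDerivAt (x := w)).const_mul (-(y i))).add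
        ((hA ⟪φ i, w⟫).comp_hasFDerivAt w (innerSL ℝ (φ i)).hasFDerivAt)).add
    ((hasStrictFDerivAt_norm_sq w).hasFDerivAt.const_mul (δ / 2))
  refine hFD.congr_fderiv ?_
  ext v
  simp only [add_apply, FunLike.coe_sum, Finset.sum_apply, smul_apply, innerSL_apply_apply,
    InnerProductSpace.toDual_apply_apply, inner_add_left, sum_inner, real_inner_smul_left,
    smul_eq_mul, nsmul_eq_mul, Nat.cast_ofNat]
  congr 1
  · exact Finset.sum_congr rfl fun i _ => by ring
  · ring

theorem glm_gradient_eq_of_stationary (φ : ι → E) (y : ι → ℝ) (h : ℝ → ℝ) (δ : ℝ)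
    {wstar : E} (hstat : ∑ i, (h ⟪φ i, wstar⟫ - y i) • φ i + δ • wstar = 0) (w : E) :
    ∑ i, (h ⟪φ i, w⟫ - y i) • φ i + δ • w
      = ∑ i, (h ⟪φ i, w⟫ - h ⟪φ i, wstar⟫) • φ i + δ • (w - wstar) := by
  rw [← sub_zero (_ + δ • w), ← hstat, smul_sub]
  simp only [sub_smul, Finset.sum_sub_distrib]
  abel

end GLM

theorem stmt12_general {P N K : ℕ}
    (φ : Fin N → EuclideanSpace ℝ (Fin P)) (y : Fin N → ℝ)
    (u : Fin K → EuclideanSpace ℝ (Fin P)) (s : Fin K → ℝ) (V : Fin N → Fin K → ℝ)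
    (hSVD : ∀ i, φ i = ∑ j, (s j * V i j) • u j)
    (A h : ℝ → ℝ) (hA : ∀ x, HasDerivAt A (h x) x)
    (δ : ℝ)
    (wstar w : EuclideanSpace ℝ (Fin P))
    (hstat : ∑ i, (h ⟪φ i, wstar⟫ - y i) • φ i + δ • wstar = 0)
    (dx : Fin N → ℝ) (hdx : ∀ i, dx i = h ⟪φ i, w⟫ - h ⟪φ i, wstar⟫)
    (Du : Fin K → ℝ)
    (hDu0 : ∀ j, Du j ≠ 0)
    (β : Fin K → ℝ) (hβ : ∀ j, β j = (Du j)⁻¹ * (s j * ∑ i, V i j * dx i)) :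
    (∑ j, (β j * Du j) • u j + δ • (w - wstar)
        = ∑ i, dx i • φ i + δ • (w - wstar)) ∧
    HasGradientAt
      (fun w => ∑ i, (-(y i) * ⟪φ i, w⟫ + A ⟪φ i, w⟫) + (δ / 2) * ‖w‖ ^ 2)
      (∑ j, (β j * Du j) • u j + δ • (w - wstar)) w := by
  have hβDu : ∀ j, β j * Du j = s j * ∑ i, V i j * dx i := fun j => by
    rw [mul_comm, hβ, mul_inv_cancel_left₀ (hDu0 j)]
  have hreconstruct : ∑ j, (β j * Du j) • u j = ∑ i, dx i • φ i := by
    simp_rw [hβDu, sum_smul_eq_sum_smul_of_eq_sum_smul hSVD dx]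
  refine ⟨by rw [hreconstruct], ?_⟩
  simp_rw [hreconstruct, hdx, ← glm_gradient_eq_of_stationary φ y h δ hstat w]
  exact hasGradientAt_glm_loss φ y hA δ w

/-- Optimal K-prior exact reconstruction: let `Φ^⊤ = U S V^⊤` be a compact SVD of rank
`K` (i.e. `φ_i = Σ_j s_j V_{ij} u_j`), memory `M* = {u_1,…,u_K}` the left singular
vectors, and weights `β*_j = D_u(j)⁻¹ s_j Σ_i V_{ij} d_x(i)` where `d_x(i) =
h(φ_i^⊤w) − h(φ_i^⊤w*)` and `D_u(j) = h(u_j^⊤w) − h(u_j^⊤w*)` (nonzero). Then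
`Σ_j β*_j (h(u_j^⊤w) − h(u_j^⊤w*)) u_j + δ(w − w*) = Σ_i d_x(i) φ_i + δ(w − w*)`,
which equals `∇ℓ̄(w)` since `w*` is a stationary point of `ℓ̄`. -/
theorem stmt12 {P N K : ℕ}
    (φ : Fin N → EuclideanSpace ℝ (Fin P)) (y : Fin N → ℝ)
    (u : Fin K → EuclideanSpace ℝ (Fin P)) (s : Fin K → ℝ) (V : Fin N → Fin K → ℝ)
    (hSVD : ∀ i, φ i = ∑ j, (s j * V i j) • u j)
    (A h : ℝ → ℝ) (hA : ∀ x, HasDerivAt A (h x) x)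
    (δ : ℝ) (hδ : 0 < δ)
    (wstar w : EuclideanSpace ℝ (Fin P))
    (hstat : ∑ i, (h ⟪φ i, wstar⟫ - y i) • φ i + δ • wstar = 0)
    (dx : Fin N → ℝ) (hdx : ∀ i, dx i = h ⟪φ i, w⟫ - h ⟪φ i, wstar⟫)
    (Du : Fin K → ℝ) (hDu : ∀ j, Du j = h ⟪u j, w⟫ - h ⟪u j, wstar⟫)
    (hDu0 : ∀ j, Du j ≠ 0)
    (β : Fin K → ℝ) (hβ : ∀ j, β j = (Du j)⁻¹ * (s j * ∑ i, V i j * dx i)) :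
    (∑ j, (β j * Du j) • u j + δ • (w - wstar)
        = ∑ i, dx i • φ i + δ • (w - wstar)) ∧
    HasGradientAt
      (fun w => ∑ i, (-(y i) * ⟪φ i, w⟫ + A ⟪φ i, w⟫) + (δ / 2) * ‖w‖ ^ 2)
      (∑ j, (β j * Du j) • u j + δ • (w - wstar)) w :=
  stmt12_general φ y u s V hSVD A h hA δ wstar w hstat dx hdx Du hDu0 β hβ
end

section
/- Representer-form optimality for Add Data: if w_+ minimizes ℓ_j(w) + K(w; w*, X) for a GLM with K-prior including L2 term (δ/2)‖w − w*‖² and w_+ = Φ_+^⊤ β for some β ∈ ℝ^{N+1}, then multiplying the stationarity condition by Φ_+ yields 0 = Σ_{i∈D∪{j}} (h(β^⊤k_{i,+}) − c_i) k_{i,+} + δ K_+ β − δ Φ_+ w*, where K_+ = Φ_+ Φ_+^⊤ with columns k_{i,+}, c_j = y_j and c_i = h(φ_i^⊤w*) for i ∈ D. -/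
open RealInnerProductSpace

/-- Representer-form optimality for Add Data: if `w₊` satisfies the stationarity
condition of `ℓ_j(w) + K(w; w*, X)` for a GLM (with L2 term `(δ/2)‖w − w*‖²`) and
`w₊ = Φ₊^⊤ β`, then multiplying the stationarity condition by `Φ₊` yields, for each row
`l`, `0 = Σ_i (h(β^⊤k_{i,+}) − c_i) K_{li} + δ (K₊β)_l − δ (Φ₊ w*)_l`, where
`K₊ = Φ₊Φ₊^⊤`, `c_j = y_j`, and `c_i = h(φ_i^⊤ w*)` for `i ∈ D`. -/
theorem stmt14 {P N : ℕ}
    (φ : Fin (N + 1) → EuclideanSpace ℝ (Fin P))  -- rows of Φ₊, on D ∪ {j}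
    (c : Fin (N + 1) → ℝ)  -- c_j = y_j for the new point, c_i = h(φ_i^⊤ w*) on D
    (h : ℝ → ℝ) (δ : ℝ) (hδ : 0 < δ)
    (wstar wplus : EuclideanSpace ℝ (Fin P))
    (β : Fin (N + 1) → ℝ)
    (hrep : wplus = ∑ l, β l • φ l)
    (hstat : ∑ i, (h ⟪φ i, wplus⟫ - c i) • φ i + δ • (wplus - wstar) = 0) :
    ∀ l : Fin (N + 1),
      0 = ∑ i, (h (∑ l', β l' * ⟪φ l', φ i⟫) - c i) * ⟪φ l, φ i⟫
          + δ * (∑ i, ⟪φ l, φ i⟫ * β i) - δ * ⟪φ l, wstar⟫ := by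
  intro l
  have key : ∀ i, ⟪φ i, wplus⟫ = ∑ l', β l' * ⟪φ l', φ i⟫ := by
    intro i
    rw [hrep, inner_sum]
    exact Finset.sum_congr rfl fun l' _ => by
      rw [real_inner_smul_right, real_inner_comm]
  have h2 : ⟪φ l, wplus⟫ = ∑ i, ⟪φ l, φ i⟫ * β i := by
    rw [hrep, inner_sum]
    exact Finset.sum_congr rfl fun i _ => by rw [real_inner_smul_right]; ring
  have hst := congrArg (fun v => ⟪φ l, v⟫) hstat
  simp only [inner_add_right, inner_sum, real_inner_smul_right, inner_sub_right,
    inner_zero_right] at hst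
  simp_rw [key] at hst
  have h3 : ∑ l', β l' * ⟪φ l', φ l⟫ = ∑ i, ⟪φ l, φ i⟫ * β i :=
    Finset.sum_congr rfl fun i _ => by rw [real_inner_comm]; ring
  rw [h3] at hst
  linarith [hst]
end

section
/- Exactness for linear regression add-data: for squared loss with f_w^i = φ_i^⊤w, A(f) = f²/2, h(f) = f, the K-prior objective ℓ_j(w) + Σ_{i∈D}(1/2)(φ_i^⊤w* − φ_i^⊤w)² + (δ/2)‖w − w*‖² and the batch objective Σ_{i∈D∪{j}}(1/2)(y_i − φ_i^⊤w)² + (δ/2)‖w‖² have the same unique minimizer, where w* = (Φ^⊤Φ + δI)^{-1}Φ^⊤y is the ridge solution on D. -/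
open RealInnerProductSpace Filter

section Aux

variable {P N : ℕ}

private lemma stmt18_unique
    (φ : Fin N → EuclideanSpace ℝ (Fin P)) (y : Fin N → ℝ)
    (φj : EuclideanSpace ℝ (Fin P)) (yj : ℝ)
    (δ : ℝ) (hδ : 0 < δ)
    (F : EuclideanSpace ℝ (Fin P) → ℝ)
    (hF : F = fun w => ((1 / 2 : ℝ) * (yj - ⟪φj, w⟫) ^ 2
        + ∑ i, (1 / 2 : ℝ) * (y i - ⟪φ i, w⟫) ^ 2) + (δ / 2) * ‖w‖ ^ 2)
    (m m' : EuclideanSpace ℝ (Fin P))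
    (hm : ∀ w, F m ≤ F w) (hm' : ∀ w, F m' ≤ F w) : m' = m := by
  set mid : EuclideanSpace ℝ (Fin P) := (1/2 : ℝ) • (m + m') with hmid
  have hmidin : ∀ v : EuclideanSpace ℝ (Fin P),
      ⟪v, mid⟫ = (⟪v, m⟫ + ⟪v, m'⟫)/2 := by
    intro v
    simp [hmid, inner_smul_right, inner_add_right]
    ring
  have hmidn : ‖mid‖^2 = (‖m‖^2 + 2*⟪m, m'⟫ + ‖m'‖^2)/4 := by
    rw [hmid, norm_smul]
    rw [mul_pow]
    rw [norm_add_sq_real]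
    norm_num
    ring
  have hsubn : ‖m - m'‖^2 = ‖m‖^2 - 2*⟪m, m'⟫ + ‖m'‖^2 := norm_sub_sq_real m m'
  have hkey : F m + F m' - 2 * F mid
      = (1/4)*(⟪φj, m⟫ - ⟪φj, m'⟫)^2
        + ∑ i, (1/4 : ℝ)*(⟪φ i, m⟫ - ⟪φ i, m'⟫)^2
        + (δ/4)*‖m - m'‖^2 := by
    simp only [hF]
    rw [hmidn, hsubn, hmidin φj]
    have hs : ∑ i, (1/2:ℝ)*(y i - ⟪φ i, mid⟫)^2
        = ∑ i, (((1/2:ℝ)*(y i - ⟪φ i, m⟫)^2 + (1/2:ℝ)*(y i - ⟪φ i, m'⟫)^2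
            - (1/4:ℝ)*(⟪φ i, m⟫ - ⟪φ i, m'⟫)^2)/2) :=
      Finset.sum_congr rfl fun i _ => by rw [hmidin]; ring
    rw [hs]
    rw [← Finset.sum_div, Finset.sum_sub_distrib, Finset.sum_add_distrib]
    ring
  have h1 : F m ≤ F mid := hm mid
  have h2 : F m' ≤ F mid := hm' mid
  have hsumnn : (0:ℝ) ≤ ∑ i, (1/4 : ℝ)*(⟪φ i, m⟫ - ⟪φ i, m'⟫)^2 :=
    Finset.sum_nonneg fun i _ => by positivity
  have hnn : ‖m - m'‖^2 ≤ 0 := by nlinarith [sq_nonneg (⟪φj, m⟫ - ⟪φj, m'⟫)]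
  have : m - m' = 0 := by
    have := sq_nonneg ‖m - m'‖
    have h0 : ‖m - m'‖^2 = 0 := le_antisymm hnn this
    have := pow_eq_zero_iff (n := 2) (by norm_num) |>.mp h0
    simpa [norm_eq_zero] using this
  have : m = m' := by rwa [sub_eq_zero] at this
  exact this.symm

end Aux

/-- Exactness for linear regression add-data: for squared loss with `f_w^i = φ_i^⊤w`,
the K-prior objective `ℓ_j(w) + Σ_{i∈D}(1/2)(φ_i^⊤w* − φ_i^⊤w)² + (δ/2)‖w − w*‖²`
and the batch objective `Σ_{i∈D∪{j}}(1/2)(y_i − φ_i^⊤w)² + (δ/2)‖w‖²` have the same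
unique minimizer, where `w*` is the ridge solution on `D`, i.e.
`Σ_i ⟪φ_i, w*⟫ φ_i + δ w* = Σ_i y_i φ_i`. -/
theorem stmt18 {P N : ℕ}
    (φ : Fin N → EuclideanSpace ℝ (Fin P)) (y : Fin N → ℝ)
    (φj : EuclideanSpace ℝ (Fin P)) (yj : ℝ)
    (δ : ℝ) (hδ : 0 < δ)
    (wstar : EuclideanSpace ℝ (Fin P))
    (hridge : ∑ i, ⟪φ i, wstar⟫ • φ i + δ • wstar = ∑ i, y i • φ i)
    (F G : EuclideanSpace ℝ (Fin P) → ℝ)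
    (hF : F = fun w => ((1 / 2 : ℝ) * (yj - ⟪φj, w⟫) ^ 2
        + ∑ i, (1 / 2 : ℝ) * (y i - ⟪φ i, w⟫) ^ 2) + (δ / 2) * ‖w‖ ^ 2)
    (hG : G = fun w => (1 / 2 : ℝ) * (yj - ⟪φj, w⟫) ^ 2
        + (∑ i, (1 / 2 : ℝ) * (⟪φ i, wstar⟫ - ⟪φ i, w⟫) ^ 2
           + (δ / 2) * ‖w - wstar‖ ^ 2)) :
    ∃ m : EuclideanSpace ℝ (Fin P),
      (∀ w, F m ≤ F w) ∧ (∀ w, G m ≤ G w) ∧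
      (∀ m', (∀ w, F m' ≤ F w) → m' = m) ∧
      (∀ m', (∀ w, G m' ≤ G w) → m' = m) := by
  -- F and G differ by a constant
  set C : ℝ := ∑ i, ((1/2:ℝ)*((y i)^2 - (⟪φ i, wstar⟫:ℝ)^2)) - (δ/2)*‖wstar‖^2 with hC
  have key : ∀ w, F w = G w + C := by
    intro w
    have hr : ∑ i, ⟪φ i, wstar⟫ * ⟪φ i, w⟫ + δ * ⟪wstar, w⟫
        = ∑ i, y i * ⟪φ i, w⟫ := by
      have h := congrArg (fun v : EuclideanSpace ℝ (Fin P) => ⟪v, w⟫) hridge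
      simpa only [sum_inner, inner_add_left, real_inner_smul_left] using h
    have hn : ‖w - wstar‖^2 = ‖w‖^2 - 2*⟪w, wstar⟫ + ‖wstar‖^2 := norm_sub_sq_real w wstar
    rw [hF, hG]
    simp only
    rw [hn, hC]
    have hsum : ∑ i, (1/2:ℝ)*(y i - ⟪φ i, w⟫)^2
        = ∑ i, ((1/2:ℝ)*(⟪φ i, wstar⟫ - ⟪φ i, w⟫)^2
            + (1/2:ℝ)*((y i)^2 - (⟪φ i, wstar⟫:ℝ)^2)
            + (⟪φ i, wstar⟫ * ⟪φ i, w⟫ - y i * ⟪φ i, w⟫)) :=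
      Finset.sum_congr rfl fun i _ => by ring
    rw [hsum, Finset.sum_add_distrib, Finset.sum_add_distrib, Finset.sum_sub_distrib]
    linear_combination hr - δ * real_inner_comm w wstar
  -- existence of minimizer of F
  have hcont : Continuous F := by
    rw [hF]
    refine Continuous.add (Continuous.add ?_ ?_) ?_
    · exact continuous_const.mul ((continuous_const.sub (continuous_const.inner continuous_id)).pow 2)
    · exact continuous_finset_sum _ fun i _ =>
        continuous_const.mul ((continuous_const.sub (continuous_const.inner continuous_id)).pow 2)
    · exact continuous_const.mul ((continuous_id.norm).pow 2)
  have hlb : ∀ w, (δ/2)*‖w‖^2 ≤ F w := by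
    intro w
    rw [hF]
    simp only
    have h1 : (0:ℝ) ≤ (1/2:ℝ)*(yj - ⟪φj, w⟫)^2 := by positivity
    have h2 : (0:ℝ) ≤ ∑ i, (1/2:ℝ)*(y i - ⟪φ i, w⟫)^2 :=
      Finset.sum_nonneg fun i _ => by positivity
    linarith
  have hcoer : Tendsto F (cocompact (EuclideanSpace ℝ (Fin P))) atTop := by
    have h1 : Tendsto (fun w : EuclideanSpace ℝ (Fin P) => (δ/2)*‖w‖^2)
        (cocompact _) atTop := by
      have hn := tendsto_norm_cocompact_atTop (E := EuclideanSpace ℝ (Fin P))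
      have hp : Tendsto (fun t : ℝ => (δ/2)*t^2) atTop atTop :=
        (tendsto_pow_atTop (by norm_num)).const_mul_atTop (by positivity)
      exact hp.comp hn
    exact tendsto_atTop_mono hlb h1
  obtain ⟨m, hm⟩ := hcont.exists_forall_le hcoer
  have hGm : ∀ w, G m ≤ G w := by
    intro w
    have := hm w
    rw [key m, key w] at this
    linarith
  refine ⟨m, hm, hGm, ?_, ?_⟩
  · intro m' hm'
    exact stmt18_unique φ y φj yj δ hδ F hF m m' hm hm'
  · intro m' hm'
    have hFm' : ∀ w, F m' ≤ F w := by
      intro w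
      have := hm' w
      rw [key m', key w]
      linarith
    exact stmt18_unique φ y φj yj δ hδ F hF m m' hm hFm'
end
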